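/- arXiv:2408.13903 — 2 statements merged into one kernel-verified Lean document; each statement's English description precedes it below -/
import Mathlib

section
/- If (p,i,n,o,w) is a classical solution of the 1D multi-species forward system whose fields are continuous in t on [0,1] and which satisfies the initial conditions p(·,0) = p₀, i(·,0) = 0, n(·,0) = 0, w(·,0) = 1 − p₀ for some continuous function p₀ : Ω → ℝ, then p(x,t) + i(x,t) + n(x,t) + w(x,t) = 1 for all x ∈ Ω and t ∈ [0,1]. -/
open Real

/-- Smoothed Heaviside function `H_ω(x) = (1+e^{−ωx})⁻¹`. -/
noncomputable def Hsm (ω x : ℝ) : ℝ := (1 + Real.exp (-ω * x))⁻¹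

/-- Oxygen multiplier `φ` in the logistic reaction operator. -/
noncomputable def phiR (om oi o : ℝ) : ℝ :=
  if o < om then 0 else if o ≤ oi then (o - om) / (oi - om) else 1

/-!
Summing the equations for `p`, `i`, `n` and `w`, the diffusion flux of `i` is cancelled by that
of `w`, the logistic growth of `p` and `i` by the corresponding loss in `w`, and the exchange
terms `α`, `β`, `γ` cancel pairwise, so `∂ₜ(p + i + n + w) = 0` at every point of `Ω`. The
total density is therefore constant in time and equals its initial value `p₀ + 0 + 0 + (1 − p₀)`.
-/

open Set

theorem eq_of_hasDerivAt_zero_of_continuousOn {f : ℝ → ℝ} {a b t : ℝ}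
    (hf : ContinuousOn f (Icc a b)) (hf' : ∀ τ ∈ Ioo a b, HasDerivAt f 0 τ)
    (ht : t ∈ Icc a b) : f t = f a := by
  rcases ht.1.eq_or_lt with rfl | hat
  · rfl
  obtain ⟨-, -, hslope⟩ := exists_hasDerivAt_eq_slope f (fun _ => 0) hat
    (hf.mono (Icc_subset_Icc_right ht.2))
    (fun τ hτ => hf' τ ⟨hτ.1, hτ.2.trans_le ht.2⟩)
  exact sub_eq_zero.mp ((div_eq_zero_iff.mp hslope.symm).resolve_right (sub_pos.mpr hat).ne')

theorem total_density_equals_one_1D_general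
    (κ ρ α0 β0 γ0 oh om oi ω : ℝ)
    (p i n o w : ℝ → ℝ → ℝ)
    (hregt : ∀ x, ContDiffOn ℝ 1 (fun τ => p x τ) (Set.Icc 0 1) ∧
        ContDiffOn ℝ 1 (fun τ => i x τ) (Set.Icc 0 1) ∧
        ContDiffOn ℝ 1 (fun τ => n x τ) (Set.Icc 0 1) ∧
        ContDiffOn ℝ 1 (fun τ => o x τ) (Set.Icc 0 1) ∧
        ContDiffOn ℝ 1 (fun τ => w x τ) (Set.Icc 0 1))
    (heqp : ∀ x ∈ Set.Icc (0:ℝ) (2 * Real.pi), ∀ t ∈ Set.Ioc (0:ℝ) 1,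
        HasDerivAt (fun τ => p x τ)
          (ρ * w x t * phiR om oi (o x t) * p x t * (1 - (p x t + i x t + n x t))
            - α0 * Hsm ω (oi - o x t) * p x t * (1 - i x t)
            + β0 * Hsm ω (o x t - oi) * i x t * (1 - p x t)
            - γ0 * Hsm ω (oh - o x t) * p x t * (1 - n x t)) t)
    (heqi : ∀ x ∈ Set.Icc (0:ℝ) (2 * Real.pi), ∀ t ∈ Set.Ioc (0:ℝ) 1,
        HasDerivAt (fun τ => i x τ)
          (deriv (fun y => κ * w y t * deriv (fun z => i z t) y) x
            + ρ * w x t * phiR om oi (o x t) * i x t * (1 - (p x t + i x t + n x t))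
            + α0 * Hsm ω (oi - o x t) * p x t * (1 - i x t)
            - β0 * Hsm ω (o x t - oi) * i x t * (1 - p x t)
            - γ0 * Hsm ω (oh - o x t) * i x t * (1 - n x t)) t)
    (heqn : ∀ x ∈ Set.Icc (0:ℝ) (2 * Real.pi), ∀ t ∈ Set.Ioc (0:ℝ) 1,
        HasDerivAt (fun τ => n x τ)
          (γ0 * Hsm ω (oh - o x t) * (i x t + p x t) * (1 - n x t)) t)
    (heqw : ∀ x ∈ Set.Icc (0:ℝ) (2 * Real.pi), ∀ t ∈ Set.Ioc (0:ℝ) 1,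
        HasDerivAt (fun τ => w x τ)
          (-(deriv (fun y => κ * w y t * deriv (fun z => i z t) y) x
            + ρ * w x t * phiR om oi (o x t) * p x t * (1 - (p x t + i x t + n x t))
            + ρ * w x t * phiR om oi (o x t) * i x t * (1 - (p x t + i x t + n x t)))) t)
    (p0 : ℝ → ℝ)
    (hicp : ∀ x, p x 0 = p0 x) (hici : ∀ x, i x 0 = 0) (hicn : ∀ x, n x 0 = 0)
    (hicw : ∀ x, w x 0 = 1 - p0 x) :
    ∀ x ∈ Set.Icc (0:ℝ) (2 * Real.pi), ∀ t ∈ Set.Icc (0:ℝ) 1,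
      p x t + i x t + n x t + w x t = 1 := by
  intro x hx t ht
  have hcont : ContinuousOn (fun τ => p x τ + i x τ + n x τ + w x τ) (Icc 0 1) := by
    obtain ⟨hp, hi, hn, -, hw⟩ := hregt x
    exact ((hp.continuousOn.add hi.continuousOn).add hn.continuousOn).add hw.continuousOn
  have hconserved : ∀ τ ∈ Ioo (0:ℝ) 1,
      HasDerivAt (fun τ => p x τ + i x τ + n x τ + w x τ) 0 τ := by
    intro τ hτ
    replace hτ := Ioo_subset_Ioc_self hτ
    exact ((((heqp x hx τ hτ).add (heqi x hx τ hτ)).add (heqn x hx τ hτ)).add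
      (heqw x hx τ hτ)).congr_deriv (by ring)
  calc p x t + i x t + n x t + w x t = p x 0 + i x 0 + n x 0 + w x 0 :=
        eq_of_hasDerivAt_zero_of_continuousOn hcont hconserved ht
    _ = 1 := by rw [hicp, hici, hicn, hicw]; ring

/-- a classical solution of the 1D multi-species forward system with the stated
initial conditions satisfies `p + i + n + w = 1` on `Ω × [0,1]`. -/
theorem total_density_equals_one_1D
    (κ ρ α0 β0 γ0 δc δs oh om oi ω : ℝ)
    (hκ : 0 ≤ κ) (hρ : 0 ≤ ρ) (hα0 : 0 ≤ α0) (hβ0 : 0 ≤ β0) (hγ0 : 0 ≤ γ0)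
    (hδc : 0 ≤ δc) (hδs : 0 ≤ δs) (homoi : om < oi) (hω : 0 < ω)
    (p i n o w : ℝ → ℝ → ℝ)
    (hper : ∀ t, Function.Periodic (fun x => p x t) (2 * Real.pi) ∧
        Function.Periodic (fun x => i x t) (2 * Real.pi) ∧
        Function.Periodic (fun x => n x t) (2 * Real.pi) ∧
        Function.Periodic (fun x => o x t) (2 * Real.pi) ∧
        Function.Periodic (fun x => w x t) (2 * Real.pi))
    (hregx : ∀ t ∈ Set.Icc (0:ℝ) 1, ContDiff ℝ 2 (fun x => p x t) ∧
        ContDiff ℝ 2 (fun x => i x t) ∧ ContDiff ℝ 2 (fun x => n x t) ∧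
        ContDiff ℝ 2 (fun x => o x t) ∧ ContDiff ℝ 2 (fun x => w x t))
    (hregt : ∀ x, ContDiffOn ℝ 1 (fun τ => p x τ) (Set.Icc 0 1) ∧
        ContDiffOn ℝ 1 (fun τ => i x τ) (Set.Icc 0 1) ∧
        ContDiffOn ℝ 1 (fun τ => n x τ) (Set.Icc 0 1) ∧
        ContDiffOn ℝ 1 (fun τ => o x τ) (Set.Icc 0 1) ∧
        ContDiffOn ℝ 1 (fun τ => w x τ) (Set.Icc 0 1))
    (heqp : ∀ x ∈ Set.Icc (0:ℝ) (2 * Real.pi), ∀ t ∈ Set.Ioc (0:ℝ) 1,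
        HasDerivAt (fun τ => p x τ)
          (ρ * w x t * phiR om oi (o x t) * p x t * (1 - (p x t + i x t + n x t))
            - α0 * Hsm ω (oi - o x t) * p x t * (1 - i x t)
            + β0 * Hsm ω (o x t - oi) * i x t * (1 - p x t)
            - γ0 * Hsm ω (oh - o x t) * p x t * (1 - n x t)) t)
    (heqi : ∀ x ∈ Set.Icc (0:ℝ) (2 * Real.pi), ∀ t ∈ Set.Ioc (0:ℝ) 1,
        HasDerivAt (fun τ => i x τ)
          (deriv (fun y => κ * w y t * deriv (fun z => i z t) y) x
            + ρ * w x t * phiR om oi (o x t) * i x t * (1 - (p x t + i x t + n x t))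
            + α0 * Hsm ω (oi - o x t) * p x t * (1 - i x t)
            - β0 * Hsm ω (o x t - oi) * i x t * (1 - p x t)
            - γ0 * Hsm ω (oh - o x t) * i x t * (1 - n x t)) t)
    (heqn : ∀ x ∈ Set.Icc (0:ℝ) (2 * Real.pi), ∀ t ∈ Set.Ioc (0:ℝ) 1,
        HasDerivAt (fun τ => n x τ)
          (γ0 * Hsm ω (oh - o x t) * (i x t + p x t) * (1 - n x t)) t)
    (heqo : ∀ x ∈ Set.Icc (0:ℝ) (2 * Real.pi), ∀ t ∈ Set.Ioc (0:ℝ) 1,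
        HasDerivAt (fun τ => o x τ)
          (-(δc * o x t * p x t) + δs * (1 - o x t) * w x t) t)
    (heqw : ∀ x ∈ Set.Icc (0:ℝ) (2 * Real.pi), ∀ t ∈ Set.Ioc (0:ℝ) 1,
        HasDerivAt (fun τ => w x τ)
          (-(deriv (fun y => κ * w y t * deriv (fun z => i z t) y) x
            + ρ * w x t * phiR om oi (o x t) * p x t * (1 - (p x t + i x t + n x t))
            + ρ * w x t * phiR om oi (o x t) * i x t * (1 - (p x t + i x t + n x t)))) t)
    (p0 : ℝ → ℝ) (hp0cont : Continuous p0)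
    (hicp : ∀ x, p x 0 = p0 x) (hici : ∀ x, i x 0 = 0) (hicn : ∀ x, n x 0 = 0)
    (hicw : ∀ x, w x 0 = 1 - p0 x) :
    ∀ x ∈ Set.Icc (0:ℝ) (2 * Real.pi), ∀ t ∈ Set.Icc (0:ℝ) 1,
      p x t + i x t + n x t + w x t = 1 :=
  total_density_equals_one_1D_general κ ρ α0 β0 γ0 oh om oi ω p i n o w hregt heqp heqi heqn heqw p0
    hicp hici hicn hicw
end

section
/- J : ℝ → ℝ is differentiable at every i_e ∈ ℝ, with J′(i_e) = −∫_Ω (O_l(x; i_e) − l_d(x))·ψ(x)·H_ω′(i₁(x) − i_e) dx, where H_ω′ is the derivative of H_ω. (This is the gradient of the objective with respect to the edema threshold parameter i_e, eq. (23j) of the paper.) -/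
open Real

/-!
Differentiation under the integral sign. The `i_e`-derivative of the integrand is jointly
continuous on `ℝ × [0, 2π]`, hence bounded on the compact set `[i_e - 1, i_e + 1] × [0, 2π]`,
and that constant dominates it near `i_e`. Since `H_ω` is smooth, no formula for `H_ω′` is needed.
-/

open Set Metric

theorem hasDerivAt_intervalIntegral_of_continuousOn {E : Type*} [NormedAddCommGroup E]
    [NormedSpace ℝ E] {F F' : ℝ → ℝ → E} {a b e₀ : ℝ}
    (hF : ∀ e, ContinuousOn (F e) (uIcc a b))
    (hF' : ContinuousOn (fun p : ℝ × ℝ => F' p.1 p.2) (univ ×ˢ uIcc a b))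
    (hderiv : ∀ x ∈ uIcc a b, ∀ e, HasDerivAt (F · x) (F' e x) e) :
    HasDerivAt (fun e => ∫ x in a..b, F e x) (∫ x in a..b, F' e₀ x) e₀ := by
  obtain ⟨C, hC⟩ := (isCompact_closedBall e₀ 1 |>.prod isCompact_uIcc).exists_bound_of_continuousOn
    (hF'.mono (prod_mono (subset_univ _) le_rfl))
  have hF'₀ : ContinuousOn (F' e₀) (uIcc a b) :=
    hF'.comp (continuousOn_const.prodMk continuousOn_id) fun x hx => ⟨mem_univ _, hx⟩
  refine (intervalIntegral.hasDerivAt_integral_of_dominated_loc_of_deriv_le (bound := fun _ => C)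
    (ball_mem_nhds e₀ one_pos) (.of_forall fun e => ?_) (hF e₀).intervalIntegrable
    ?_ ?_ intervalIntegrable_const ?_).2
  · exact ((hF e).mono uIoc_subset_uIcc).aestronglyMeasurable measurableSet_uIoc
  · exact (hF'₀.mono uIoc_subset_uIcc).aestronglyMeasurable measurableSet_uIoc
  · exact .of_forall fun x hx e he => hC (e, x) ⟨ball_subset_closedBall he, uIoc_subset_uIcc hx⟩
  · exact .of_forall fun x hx e _ => hderiv x (uIoc_subset_uIcc hx) e

theorem contDiff_Hsm (ω : ℝ) : ContDiff ℝ 1 (Hsm ω) :=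
  (contDiff_const.add (contDiff_const.mul contDiff_id).exp).inv fun _ => by positivity

theorem hasDerivAt_half_sq_mul_comp_sub_sub {G : ℝ → ℝ} (hG : Differentiable ℝ G)
    (p q r e : ℝ) :
    HasDerivAt (fun e => 1 / 2 * (p * G (q - e) - r) ^ 2)
      (-((p * G (q - e) - r) * p * deriv G (q - e))) e := by
  have hinner : HasDerivAt (fun e => p * G (q - e) - r) (p * (deriv G (q - e) * -1)) e :=
    (((hG _).hasDerivAt.comp e ((hasDerivAt_id e).const_sub q)).const_mul p).sub_const r
  exact ((hinner.fun_pow 2).const_mul (1 / 2)).congr_deriv (by norm_num; ring)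

theorem edema_threshold_gradient_general
    (ω : ℝ)
    (ψ i1 ld : ℝ → ℝ)
    (hψ : ContinuousOn ψ (Set.Icc 0 (2 * Real.pi)))
    (hi1 : ContinuousOn i1 (Set.Icc 0 (2 * Real.pi)))
    (hld : ContinuousOn ld (Set.Icc 0 (2 * Real.pi))) :
    ∀ ie : ℝ,
      HasDerivAt
        (fun e => (1/2) * ∫ x in (0:ℝ)..(2 * Real.pi), (ψ x * Hsm ω (i1 x - e) - ld x)^2)
        (-(∫ x in (0:ℝ)..(2 * Real.pi),
            (ψ x * Hsm ω (i1 x - ie) - ld x) * ψ x * deriv (Hsm ω) (i1 x - ie)))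
        ie := by
  intro ie
  rw [← uIcc_of_le (by positivity : 0 ≤ 2 * π)] at hψ hi1 hld
  have hH : ContDiff ℝ 1 (Hsm ω) := contDiff_Hsm ω
  have hH_cont : Continuous (Hsm ω) := hH.continuous
  have hH'_cont : Continuous (deriv (Hsm ω)) := hH.continuous_deriv le_rfl
  have key := hasDerivAt_intervalIntegral_of_continuousOn (e₀ := ie)
    (F := fun e x => 1 / 2 * (ψ x * Hsm ω (i1 x - e) - ld x) ^ 2)
    (F' := fun e x => -((ψ x * Hsm ω (i1 x - e) - ld x) * ψ x * deriv (Hsm ω) (i1 x - e)))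
    (fun e => by fun_prop) (by fun_prop (disch := exact mapsTo_snd_prod))
    (fun x _ e => hasDerivAt_half_sq_mul_comp_sub_sub hH.differentiable_one (ψ x) (i1 x) (ld x) e)
  simpa only [intervalIntegral.integral_const_mul, intervalIntegral.integral_neg] using key

/-- the edema misfit `J(i_e) = ½∫_Ω (ψ·H_ω(i₁−i_e) − l_d)²` is differentiable in
the edema threshold `i_e`, with
`J′(i_e) = −∫_Ω (O_l − l_d)·ψ·H_ω′(i₁ − i_e)` (eq. (23j) of the paper). -/
theorem edema_threshold_gradient
    (ω : ℝ) (hω : 0 < ω)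
    (ψ i1 ld : ℝ → ℝ)
    (hψ : ContinuousOn ψ (Set.Icc 0 (2 * Real.pi)))
    (hi1 : ContinuousOn i1 (Set.Icc 0 (2 * Real.pi)))
    (hld : ContinuousOn ld (Set.Icc 0 (2 * Real.pi))) :
    ∀ ie : ℝ,
      HasDerivAt
        (fun e => (1/2) * ∫ x in (0:ℝ)..(2 * Real.pi), (ψ x * Hsm ω (i1 x - e) - ld x)^2)
        (-(∫ x in (0:ℝ)..(2 * Real.pi),
            (ψ x * Hsm ω (i1 x - ie) - ld x) * ψ x * deriv (Hsm ω) (i1 x - ie)))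
        ie :=
  edema_threshold_gradient_general ω ψ i1 ld hψ hi1 hld
end
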